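/- Let k ≥ 2, let σ be a cyclic permutation of [n], let C_1, …, C_n be the chain decomposition of the intervals along σ, and let A be a collection of intervals along σ that contains neither Y_k nor Y_k' as a weak subposet. If |A ∩ C_{i+1}| = k+1 and the second largest set of A ∩ C_{i+1} has even cardinality (i.e. C_{i+1} is of type (k+1)^L), then |A ∩ C_i| ≤ k−1; moreover, if |A ∩ C_i| = k−1, then the largest set of A ∩ C_i has the same cardinality as the second largest set of A ∩ C_{i+1} (indices of chains taken modulo n). -/

import Mathlib

open Finset

/-- The family `𝒜` contains `Y_k` as a (weak) subposet: `k + 2` pairwise distinct sets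
`A 1 ⊆ A 2 ⊆ ⋯ ⊆ A k`, `A k ⊆ B`, `A k ⊆ C`, all in `𝒜`. -/
def ContainsYk {n : ℕ} (k : ℕ) (𝒜 : Finset (Finset (Fin n))) : Prop :=
  ∃ (A : Fin k → Finset (Fin n)) (B C : Finset (Fin n)),
    (∀ i, A i ∈ 𝒜) ∧ B ∈ 𝒜 ∧ C ∈ 𝒜 ∧
    Function.Injective A ∧ (∀ i, A i ≠ B) ∧ (∀ i, A i ≠ C) ∧ B ≠ C ∧
    (∀ i j : Fin k, i ≤ j → A i ⊆ A j) ∧ (∀ i, A i ⊆ B) ∧ (∀ i, A i ⊆ C)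

/-- The family `𝒜` contains `Y_k'` as a (weak) subposet: `k + 2` pairwise distinct sets
`A k ⊆ A (k-1) ⊆ ⋯ ⊆ A 1`, `B ⊆ A k`, `C ⊆ A k`, all in `𝒜`. -/
def ContainsYk' {n : ℕ} (k : ℕ) (𝒜 : Finset (Finset (Fin n))) : Prop :=
  ∃ (A : Fin k → Finset (Fin n)) (B C : Finset (Fin n)),
    (∀ i, A i ∈ 𝒜) ∧ B ∈ 𝒜 ∧ C ∈ 𝒜 ∧
    Function.Injective A ∧ (∀ i, A i ≠ B) ∧ (∀ i, A i ≠ C) ∧ B ≠ C ∧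
    (∀ i j : Fin k, i ≤ j → A j ⊆ A i) ∧ (∀ i, B ⊆ A i) ∧ (∀ i, C ⊆ A i)

/-- The interval `{x i, x (i+1), …, x (i+t)}` along the cyclic permutation `σ`
(indices taken modulo `n`). -/
def cycInterval (n : ℕ) (σ : ZMod n ≃ Fin n) (i : ZMod n) (t : ℕ) : Finset (Fin n) :=
  (Finset.range (t + 1)).image fun s : ℕ => σ (i + (s : ZMod n))

/-- `I` is an interval along the cyclic permutation `σ`; neither `∅` nor `[n]`
is an interval. -/
def IsCycInterval (n : ℕ) (σ : ZMod n ≃ Fin n) (I : Finset (Fin n)) : Prop :=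
  ∃ (i : ZMod n) (t : ℕ), t ≤ n - 2 ∧ I = cycInterval n σ i t

/-- The chain `C i` of the chain decomposition of the intervals along `σ`: it contains
exactly one interval of each size `1, 2, …, n - 1`, where the interval of size `2k` is
`{x (i-k), …, x (i+k-1)}` and the interval of size `2k+1` is `{x (i-k), …, x (i+k)}`. -/
def chainC (n : ℕ) (σ : ZMod n ≃ Fin n) (i : ZMod n) : Finset (Finset (Fin n)) :=
  (Finset.Icc 1 (n - 1)).image fun m => cycInterval n σ (i - ((m / 2 : ℕ) : ZMod n)) (m - 1)

/-- `B` is the largest (by cardinality) member of the family `F`. -/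
def IsLargestCard {n : ℕ} (F : Finset (Finset (Fin n))) (B : Finset (Fin n)) : Prop :=
  B ∈ F ∧ ∀ X ∈ F, X.card ≤ B.card

/-- `B` is the second largest (by cardinality) member of the family `F`: exactly one
member of `F` has strictly larger cardinality. -/
def IsSecondLargestCard {n : ℕ} (F : Finset (Finset (Fin n))) (B : Finset (Fin n)) : Prop :=
  B ∈ F ∧ (F.filter fun X => B.card < X.card).card = 1

/-!
Each chain `C c` holds exactly one interval of each size, so `𝒜 ∩ C c` is described by its set
of sizes, and inclusion along a chain follows the sizes. Between neighbouring chains, the interval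
of `C c` of size `s` lies in the interval of `C (c + 1)` of size `t > s` when `t` is even or
`s + 2 ≤ t`, and the interval of `C (c + 1)` of size `t` lies in that of `C c` of size `s > t` when
`t` is even or `t + 2 ≤ s`.

Let `b` be the even size of `B`. A member of `𝒜 ∩ C i` of size `> b` contains `B`, hence all `k`
members of `𝒜 ∩ C (i + 1)` of size `≤ b`; with the largest member of `𝒜 ∩ C (i + 1)` this is a
`Y_k`. So all sizes on `C i` are at most `b`. If `k - 1` of them were `< b`, then the largest
`k - 2` of these, `B` and the largest member of `C (i + 1)` form a chain of `k` sets above both the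
smallest of them and the smallest member of `𝒜 ∩ C (i + 1)`, a `Y_k'`; that the latter lies below
the chain is forced by excluding another `Y_k'`. Both claims follow by counting.
-/

theorem containsYk_of_pairwise {n k : ℕ} {𝒜 : Finset (Finset (Fin n))}
    {l : List (Finset (Fin n))} (hlen : l.length = k) (hl𝒜 : ∀ X ∈ l, X ∈ 𝒜)
    (hl : l.Pairwise (· ⊂ ·)) {B C : Finset (Fin n)} (hB : B ∈ 𝒜) (hC : C ∈ 𝒜) (hBC : B ≠ C)
    (hlB : ∀ X ∈ l, X ⊂ B) (hlC : ∀ X ∈ l, X ⊂ C) : ContainsYk k 𝒜 := by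
  subst hlen
  refine ⟨l.get, B, C, fun j => hl𝒜 _ (l.get_mem j), hB, hC,
    List.nodup_iff_injective_get.1 (hl.imp ne_of_ssubset), fun j => (hlB _ (l.get_mem j)).ne,
    fun j => (hlC _ (l.get_mem j)).ne, hBC, fun p q hpq => ?_,
    fun j => (hlB _ (l.get_mem j)).subset, fun j => (hlC _ (l.get_mem j)).subset⟩
  rcases hpq.lt_or_eq with hpq | rfl
  · exact (List.pairwise_iff_get.1 hl p q hpq).subset
  · exact subset_rfl

theorem containsYk'_of_pairwise {n k : ℕ} {𝒜 : Finset (Finset (Fin n))}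
    {l : List (Finset (Fin n))} (hlen : l.length = k) (hl𝒜 : ∀ X ∈ l, X ∈ 𝒜)
    (hl : l.Pairwise (· ⊂ ·)) {B C : Finset (Fin n)} (hB : B ∈ 𝒜) (hC : C ∈ 𝒜) (hBC : B ≠ C)
    (hBl : ∀ X ∈ l, B ⊂ X) (hCl : ∀ X ∈ l, C ⊂ X) : ContainsYk' k 𝒜 := by
  subst hlen
  refine ⟨fun j => l.get j.rev, B, C, fun j => hl𝒜 _ (l.get_mem _), hB, hC,
    (List.nodup_iff_injective_get.1 (hl.imp ne_of_ssubset)).comp Fin.rev_injective,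
    fun j => (hBl _ (l.get_mem _)).ne', fun j => (hCl _ (l.get_mem _)).ne', hBC, fun p q hpq => ?_,
    fun j => (hBl _ (l.get_mem _)).subset, fun j => (hCl _ (l.get_mem _)).subset⟩
  rcases (Fin.rev_le_rev.2 hpq).lt_or_eq with hpq | hpq
  · exact (List.pairwise_iff_get.1 hl _ _ hpq).subset
  · show l.get q.rev ⊆ l.get p.rev
    rw [hpq]

section ChainGeometry

variable {n : ℕ} (σ : ZMod n ≃ Fin n)

theorem mem_cycInterval {c : ZMod n} {t : ℕ} {x : Fin n} :
    x ∈ cycInterval n σ c t ↔ ∃ s ≤ t, σ (c + s) = x := by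
  simp [cycInterval]

theorem cycInterval_subset_cycInterval {c c' : ZMod n} {t t' : ℕ} (r : ℕ) (hc : c = c' + r)
    (h : r + t ≤ t') : cycInterval n σ c t ⊆ cycInterval n σ c' t' := by
  intro x hx
  obtain ⟨s, hs, rfl⟩ := (mem_cycInterval σ).1 hx
  exact (mem_cycInterval σ).2 ⟨r + s, by omega, by rw [hc]; push_cast; ring_nf⟩

theorem card_cycInterval {c : ZMod n} {t : ℕ} (h : t < n) :
    (cycInterval n σ c t).card = t + 1 := by
  rw [cycInterval, card_image_of_injOn, card_range]
  intro s hs s' hs' hss'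
  have hcast : (s : ZMod n) = s' := add_left_cancel (σ.injective hss')
  simp only [coe_range, Set.mem_Iio] at hs hs'
  rwa [ZMod.natCast_eq_natCast_iff', Nat.mod_eq_of_lt (by omega),
    Nat.mod_eq_of_lt (by omega)] at hcast

/-- The member of size `m` of the chain `C c` (for `1 ≤ m < n`). -/
def chainInterval (c : ZMod n) (m : ℕ) : Finset (Fin n) :=
  cycInterval n σ (c - ((m / 2 : ℕ) : ZMod n)) (m - 1)

theorem chainC_eq_image (c : ZMod n) :
    chainC n σ c = (Icc 1 (n - 1)).image (chainInterval σ c) := rfl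

theorem card_chainInterval {c : ZMod n} {m : ℕ} (h1 : 1 ≤ m) (h2 : m ≤ n) :
    (chainInterval σ c m).card = m := by
  rw [chainInterval, card_cycInterval σ (by omega)]
  omega

theorem chainInterval_subset_chainInterval {c : ZMod n} {m m' : ℕ} (h1 : 1 ≤ m) (h : m ≤ m') :
    chainInterval σ c m ⊆ chainInterval σ c m' := by
  obtain ⟨r, hr⟩ := Nat.exists_eq_add_of_le (Nat.div_le_div_right (c := 2) h)
  exact cycInterval_subset_cycInterval σ r (by rw [hr]; push_cast; ring) (by omega)

theorem chainInterval_ssubset_chainInterval {c : ZMod n} {m m' : ℕ} (h1 : 1 ≤ m) (h : m < m')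
    (h2 : m' ≤ n) : chainInterval σ c m ⊂ chainInterval σ c m' :=
  (chainInterval_subset_chainInterval σ h1 h.le).ssubset_of_ne fun he => by
    have := congrArg card he
    rw [card_chainInterval σ h1 (by omega), card_chainInterval σ (by omega) h2] at this
    omega

theorem chainInterval_subset_chainInterval_add_one {c : ZMod n} {s t : ℕ} (h1 : 1 ≤ s)
    (h : s < t) (hp : Even t ∨ s + 2 ≤ t) : chainInterval σ c s ⊆ chainInterval σ (c + 1) t := by
  rw [Nat.even_iff] at hp
  obtain ⟨r, hr⟩ : ∃ r, t / 2 = s / 2 + 1 + r := Nat.exists_eq_add_of_le (by omega)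
  exact cycInterval_subset_cycInterval σ r (by rw [hr]; push_cast; ring) (by omega)

theorem chainInterval_add_one_subset_chainInterval {c : ZMod n} {s t : ℕ} (h1 : 1 ≤ t)
    (h : t < s) (hp : Even t ∨ t + 2 ≤ s) : chainInterval σ (c + 1) t ⊆ chainInterval σ c s := by
  rw [Nat.even_iff] at hp
  obtain ⟨r, hr⟩ : ∃ r, s / 2 + 1 = t / 2 + r := Nat.exists_eq_add_of_le (by omega)
  have hr' := congrArg (Nat.cast : ℕ → ZMod n) hr
  push_cast at hr'
  exact cycInterval_subset_cycInterval σ r (by linear_combination hr') (by omega)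

theorem chainInterval_ne_chainInterval_add_one {c : ZMod n} {m m' : ℕ} (h1 : 1 ≤ m) (h2 : m < n)
    (h1' : 1 ≤ m') (h2' : m' < n) : chainInterval σ c m ≠ chainInterval σ (c + 1) m' := by
  intro he
  obtain rfl : m = m' := by
    simpa [card_chainInterval σ h1 h2.le, card_chainInterval σ h1' h2'.le] using congrArg card he
  have hlast : σ (c + 1 - ((m / 2 : ℕ) : ZMod n) + ((m - 1 : ℕ) : ZMod n)) ∈
      chainInterval σ c m := by
    rw [he, chainInterval, mem_cycInterval]
    exact ⟨m - 1, le_rfl, rfl⟩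
  obtain ⟨s, hs, hσ⟩ := (mem_cycInterval σ).1 hlast
  have hcast : (s : ZMod n) = m := by
    have := σ.injective hσ
    rw [Nat.cast_sub h1] at this
    push_cast at this
    linear_combination this
  rw [ZMod.natCast_eq_natCast_iff', Nat.mod_eq_of_lt (by omega), Nat.mod_eq_of_lt h2] at hcast
  omega

theorem chainInterval_ssubset_chainInterval_add_one {c : ZMod n} {s t : ℕ} (h1 : 1 ≤ s)
    (h : s < t) (h2 : t < n) (hp : Even t ∨ s + 2 ≤ t) :
    chainInterval σ c s ⊂ chainInterval σ (c + 1) t :=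
  (chainInterval_subset_chainInterval_add_one σ h1 h hp).ssubset_of_ne
    (chainInterval_ne_chainInterval_add_one σ h1 (by omega) (by omega) h2)

theorem chainInterval_add_one_ssubset_chainInterval {c : ZMod n} {s t : ℕ} (h1 : 1 ≤ t)
    (h : t < s) (h2 : s < n) (hp : Even t ∨ t + 2 ≤ s) :
    chainInterval σ (c + 1) t ⊂ chainInterval σ c s :=
  (chainInterval_add_one_subset_chainInterval σ h1 h hp).ssubset_of_ne
    (chainInterval_ne_chainInterval_add_one σ (by omega) h2 h1 (by omega)).symm

theorem mem_chainC {c : ZMod n} {X : Finset (Fin n)} :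
    X ∈ chainC n σ c ↔ 1 ≤ X.card ∧ X.card < n ∧ X = chainInterval σ c X.card := by
  constructor
  · rw [chainC_eq_image, mem_image]
    rintro ⟨m, hm, rfl⟩
    rw [mem_Icc] at hm
    rw [card_chainInterval σ hm.1 (by omega)]
    exact ⟨hm.1, by omega, rfl⟩
  · rintro ⟨h1, h2, hX⟩
    rw [hX, chainC_eq_image]
    exact mem_image_of_mem _ (mem_Icc.2 ⟨h1, by omega⟩)

theorem injOn_card_chainC (c : ZMod n) : Set.InjOn card (chainC n σ c : Set (Finset (Fin n))) :=
  fun X hX Y hY hXY => by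
    rw [((mem_chainC σ).1 hX).2.2, ((mem_chainC σ).1 hY).2.2, hXY]

end ChainGeometry

section ChainSizes

variable {n : ℕ} (σ : ZMod n ≃ Fin n) (𝒜 : Finset (Finset (Fin n)))

def chainSizes (c : ZMod n) : Finset ℕ :=
  (𝒜 ∩ chainC n σ c).image card

variable {σ 𝒜}

theorem mem_chainSizes {c : ZMod n} {m : ℕ} :
    m ∈ chainSizes σ 𝒜 c ↔ (1 ≤ m ∧ m < n) ∧ chainInterval σ c m ∈ 𝒜 := by
  constructor
  · rw [chainSizes, mem_image]
    rintro ⟨X, hX, rfl⟩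
    obtain ⟨h1, h2, hXeq⟩ := (mem_chainC σ).1 (mem_inter.1 hX).2
    exact ⟨⟨h1, h2⟩, hXeq ▸ (mem_inter.1 hX).1⟩
  · rintro ⟨⟨h1, h2⟩, hm⟩
    have hmC : chainInterval σ c m ∈ chainC n σ c :=
      chainC_eq_image σ c ▸ mem_image_of_mem _ (mem_Icc.2 ⟨h1, by omega⟩)
    exact mem_image.2 ⟨_, mem_inter.2 ⟨hm, hmC⟩, card_chainInterval σ h1 h2.le⟩

theorem card_filter_chainSizes (c : ZMod n) (p : ℕ → Prop) [DecidablePred p] :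
    ((chainSizes σ 𝒜 c).filter p).card = ((𝒜 ∩ chainC n σ c).filter (fun X => p X.card)).card := by
  rw [chainSizes, filter_image, card_image_of_injOn]
  exact (injOn_card_chainC σ c).mono (coe_subset.2 ((filter_subset _ _).trans inter_subset_right))

theorem card_chainSizes (c : ZMod n) : (chainSizes σ 𝒜 c).card = (𝒜 ∩ chainC n σ c).card := by
  simpa using card_filter_chainSizes (σ := σ) (𝒜 := 𝒜) c (fun _ => True)

end ChainSizes

section ChainList

variable {n : ℕ} (σ : ZMod n ≃ Fin n) (c : ZMod n) (P : Finset ℕ)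

def chainList : List (Finset (Fin n)) :=
  (P.sort (· ≤ ·)).map (chainInterval σ c)

variable {σ c P}

theorem length_chainList : (chainList σ c P).length = P.card := by
  simp [chainList]

theorem forall_mem_chainList {p : Finset (Fin n) → Prop} :
    (∀ X ∈ chainList σ c P, p X) ↔ ∀ m ∈ P, p (chainInterval σ c m) := by
  simp [chainList]

theorem pairwise_chainList (hP : ∀ m ∈ P, 1 ≤ m ∧ m < n) : (chainList σ c P).Pairwise (· ⊂ ·) :=
  List.pairwise_map.2 <| P.sortedLT_sort.pairwise.imp_of_mem fun ha hb hab =>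
    chainInterval_ssubset_chainInterval σ (hP _ ((mem_sort _).1 ha)).1 hab
      (hP _ ((mem_sort _).1 hb)).2.le

end ChainList

theorem exists_around_of_card_filter_lt_eq_one {α : Type*} [LinearOrder α] {T : Finset α}
    {k : ℕ} {b : α} (hk : 2 ≤ k) (hT : T.card = k + 1) (hb : b ∈ T)
    (hb1 : (T.filter (b < ·)).card = 1) :
    (∃ t ∈ T, b < t) ∧ k ≤ (T.filter (· ≤ b)).card ∧
      ∃ t₀ ∈ T, t₀ < b ∧ k ≤ (T.filter (t₀ < ·)).card := by
  obtain ⟨t, ht⟩ := card_eq_one.1 hb1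
  obtain ⟨htT, hbt⟩ := mem_filter.1 (ht ▸ mem_singleton_self t)
  have hbelow : (T.filter (· ≤ b)).card = k := by
    have := card_filter_add_card_filter_not (s := T) (· ≤ b)
    simp only [not_le, ht, card_singleton] at this
    omega
  obtain ⟨t₀, ht₀T, ht₀min⟩ : ∃ t₀ ∈ T, ∀ x ∈ T, t₀ ≤ x :=
    ⟨T.min' ⟨b, hb⟩, min'_mem _ _, fun x hx => min'_le _ _ hx⟩
  have habove : k ≤ (T.filter (t₀ < ·)).card :=
    calc k = (T.erase t₀).card := by rw [card_erase_of_mem ht₀T, hT]; rfl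
      _ ≤ _ := card_le_card fun x hx => mem_filter.2
        ⟨mem_of_mem_erase hx, (ht₀min x (mem_of_mem_erase hx)).lt_of_ne' (ne_of_mem_erase hx)⟩
  refine ⟨⟨t, htT, hbt⟩, hbelow.ge, t₀, ht₀T, (ht₀min _ hb).lt_of_ne fun h => ?_, habove⟩
  rw [h, ht, card_singleton] at habove
  omega

section Constructions

variable {n k : ℕ} {σ : ZMod n ≃ Fin n} {𝒜 : Finset (Finset (Fin n))} {i : ZMod n}

theorem le_of_mem_chainSizes_of_not_containsYk (hY : ¬ ContainsYk k 𝒜) {b t : ℕ} (heven : Even b)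
    (hbelow : k ≤ ((chainSizes σ 𝒜 (i + 1)).filter (· ≤ b)).card)
    (ht : t ∈ chainSizes σ 𝒜 (i + 1)) (hbt : b < t) {s : ℕ} (hs : s ∈ chainSizes σ 𝒜 i) :
    s ≤ b := by
  by_contra! hbs
  obtain ⟨P, hPT, hPk⟩ := exists_subset_card_eq hbelow
  have hP : ∀ m ∈ P, ((1 ≤ m ∧ m < n) ∧ chainInterval σ (i + 1) m ∈ 𝒜) ∧ m ≤ b := fun m hm => by
    obtain ⟨hmT, hmb⟩ := mem_filter.1 (hPT hm)
    exact ⟨mem_chainSizes.1 hmT, hmb⟩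
  obtain ⟨⟨ht1, htn⟩, ht𝒜⟩ := mem_chainSizes.1 ht
  obtain ⟨⟨hs1, hsn⟩, hs𝒜⟩ := mem_chainSizes.1 hs
  refine hY (containsYk_of_pairwise (length_chainList.trans hPk)
    (forall_mem_chainList.2 fun m hm => (hP m hm).1.2)
    (pairwise_chainList fun m hm => (hP m hm).1.1)
    ht𝒜 hs𝒜 (chainInterval_ne_chainInterval_add_one σ hs1 hsn ht1 htn).symm
    (forall_mem_chainList.2 fun m hm => ?_) (forall_mem_chainList.2 fun m hm => ?_))
  · exact chainInterval_ssubset_chainInterval σ (hP m hm).1.1.1 ((hP m hm).2.trans_lt hbt) htn.le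
  · obtain ⟨⟨⟨hm1, -⟩, -⟩, hmb⟩ := hP m hm
    refine chainInterval_add_one_ssubset_chainInterval σ hm1 (by omega) hsn ?_
    rcases hmb.lt_or_eq with hmb | rfl
    · exact Or.inr (by omega)
    · exact Or.inl heven

theorem exists_mem_chainSizes_not_above_of_not_containsYk' (hY' : ¬ ContainsYk' k 𝒜) {t₀ : ℕ}
    (ht₀ : t₀ ∈ chainSizes σ 𝒜 (i + 1))
    (habove : k ≤ ((chainSizes σ 𝒜 (i + 1)).filter (t₀ < ·)).card) {s : ℕ}
    (hs : s ∈ chainSizes σ 𝒜 i) :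
    ∃ m ∈ chainSizes σ 𝒜 (i + 1), t₀ < m ∧ ¬ (s < m ∧ (Even m ∨ s + 2 ≤ m)) := by
  by_contra! h
  obtain ⟨U, hUT, hUk⟩ := exists_subset_card_eq habove
  have hU : ∀ m ∈ U, ((1 ≤ m ∧ m < n) ∧ chainInterval σ (i + 1) m ∈ 𝒜) ∧ t₀ < m := fun m hm => by
    obtain ⟨hmT, hm⟩ := mem_filter.1 (hUT hm)
    exact ⟨mem_chainSizes.1 hmT, hm⟩
  obtain ⟨⟨ht1, htn⟩, ht𝒜⟩ := mem_chainSizes.1 ht₀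
  obtain ⟨⟨hs1, hsn⟩, hs𝒜⟩ := mem_chainSizes.1 hs
  refine hY' (containsYk'_of_pairwise (length_chainList.trans hUk)
    (forall_mem_chainList.2 fun m hm => (hU m hm).1.2)
    (pairwise_chainList fun m hm => (hU m hm).1.1)
    ht𝒜 hs𝒜 (chainInterval_ne_chainInterval_add_one σ hs1 hsn ht1 htn).symm
    (forall_mem_chainList.2 fun m hm => ?_) (forall_mem_chainList.2 fun m hm => ?_))
  · exact chainInterval_ssubset_chainInterval σ ht1 (hU m hm).2 (hU m hm).1.1.2.le
  · obtain ⟨hsm, hp⟩ := h m (mem_filter.1 (hUT hm)).1 (hU m hm).2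
    exact chainInterval_ssubset_chainInterval_add_one σ hs1 hsm (hU m hm).1.1.2 hp

theorem containsYk'_of_chainSizes {R : Finset ℕ} {s₀ t₀ b t : ℕ} (hRk : R.card + 2 = k)
    (hR : ∀ s ∈ R, s ∈ chainSizes σ 𝒜 i ∧ s₀ < s ∧ s < b ∧ t₀ < s ∧ (Even t₀ ∨ t₀ + 2 ≤ s))
    (hs₀ : s₀ ∈ chainSizes σ 𝒜 i) (hs₀b : s₀ < b) (ht₀ : t₀ ∈ chainSizes σ 𝒜 (i + 1))
    (ht₀b : t₀ < b) (hb : b ∈ chainSizes σ 𝒜 (i + 1)) (heven : Even b)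
    (ht : t ∈ chainSizes σ 𝒜 (i + 1)) (hbt : b < t) : ContainsYk' k 𝒜 := by
  obtain ⟨⟨hs₀1, hs₀n⟩, hs₀𝒜⟩ := mem_chainSizes.1 hs₀
  obtain ⟨⟨ht₀1, ht₀n⟩, ht₀𝒜⟩ := mem_chainSizes.1 ht₀
  obtain ⟨⟨hb1, hbn⟩, hb𝒜⟩ := mem_chainSizes.1 hb
  obtain ⟨⟨ht1, htn⟩, ht𝒜⟩ := mem_chainSizes.1 ht
  have hRmem (s) (hs : s ∈ R) := mem_chainSizes.1 (hR s hs).1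
  have hbt' : chainInterval σ (i + 1) b ⊂ chainInterval σ (i + 1) t :=
    chainInterval_ssubset_chainInterval σ hb1 hbt htn.le
  have hB (s) (hs1 : 1 ≤ s) (hsb : s < b) : chainInterval σ i s ⊂ chainInterval σ (i + 1) b :=
    chainInterval_ssubset_chainInterval_add_one σ hs1 hsb hbn (Or.inl heven)
  refine containsYk'_of_pairwise
    (l := chainList σ i R ++ [chainInterval σ (i + 1) b, chainInterval σ (i + 1) t])
    (by simp [length_chainList, ← hRk]) ?_ ?_ hs₀𝒜 ht₀𝒜
    (chainInterval_ne_chainInterval_add_one σ hs₀1 hs₀n ht₀1 ht₀n) ?_ ?_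
  · simp only [List.forall_mem_append, forall_mem_chainList, List.forall_mem_cons,
      List.not_mem_nil, false_implies, implies_true, and_true]
    exact ⟨fun s hs => (hRmem s hs).2, hb𝒜, ht𝒜⟩
  · refine List.pairwise_append.2 ⟨pairwise_chainList fun s hs => (hRmem s hs).1,
      List.pairwise_pair.2 hbt', forall_mem_chainList.2 fun s hs => ?_⟩
    simp only [List.forall_mem_cons, List.not_mem_nil, false_implies, implies_true, and_true]
    have hsB := hB s (hRmem s hs).1.1 (hR s hs).2.2.1
    exact ⟨hsB, hsB.trans hbt'⟩
  · simp only [List.forall_mem_append, forall_mem_chainList, List.forall_mem_cons,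
      List.not_mem_nil, false_implies, implies_true, and_true]
    exact ⟨fun s hs => chainInterval_ssubset_chainInterval σ hs₀1 (hR s hs).2.1
      (hRmem s hs).1.2.le, hB s₀ hs₀1 hs₀b, (hB s₀ hs₀1 hs₀b).trans hbt'⟩
  · simp only [List.forall_mem_append, forall_mem_chainList, List.forall_mem_cons,
      List.not_mem_nil, false_implies, implies_true, and_true]
    have ht₀B := chainInterval_ssubset_chainInterval σ (c := i + 1) ht₀1 ht₀b hbn.le
    exact ⟨fun s hs => chainInterval_add_one_ssubset_chainInterval σ ht₀1 (hR s hs).2.2.2.1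
      (hRmem s hs).1.2 (hR s hs).2.2.2.2, ht₀B, ht₀B.trans hbt'⟩

theorem card_filter_lt_lt_of_not_containsYk' (hk : 2 ≤ k) (hY' : ¬ ContainsYk' k 𝒜)
    {b t t₀ : ℕ} (hb : b ∈ chainSizes σ 𝒜 (i + 1)) (heven : Even b)
    (ht : t ∈ chainSizes σ 𝒜 (i + 1)) (hbt : b < t) (ht₀ : t₀ ∈ chainSizes σ 𝒜 (i + 1))
    (ht₀b : t₀ < b) (habove : k ≤ ((chainSizes σ 𝒜 (i + 1)).filter (t₀ < ·)).card) :
    ((chainSizes σ 𝒜 i).filter (· < b)).card < k - 1 := by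
  by_contra! hQ
  obtain ⟨Q, hQS, hQk⟩ := exists_subset_card_eq hQ
  have hQ (s) (hs : s ∈ Q) : s ∈ chainSizes σ 𝒜 i ∧ s < b := mem_filter.1 (hQS hs)
  have hQne : Q.Nonempty := card_pos.1 (by omega)
  obtain ⟨s₀, hs₀Q, hs₀min⟩ : ∃ s₀ ∈ Q, ∀ s ∈ Q, s₀ ≤ s :=
    ⟨Q.min' hQne, min'_mem _ _, fun s hs => min'_le _ _ hs⟩
  obtain ⟨hs₀, hs₀b⟩ := hQ s₀ hs₀Q
  -- Y_k'-freeness at `s₀` gives a size `m > t₀` of `C (i + 1)` whose interval does not contain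
  -- that of size `s₀`; so `m ≤ s₀ + 1`, and parity puts the interval of size `t₀` under every
  -- interval of `C i` of size `> s₀`.
  obtain ⟨m, -, ht₀m, hm⟩ := exists_mem_chainSizes_not_above_of_not_containsYk' hY' ht₀ habove hs₀
  refine hY' (containsYk'_of_chainSizes (R := Q.erase s₀)
    (by rw [card_erase_of_mem hs₀Q, hQk]; omega) (fun s hs => ?_)
    hs₀ hs₀b ht₀ ht₀b hb heven ht hbt)
  have hs₀s := (hs₀min s (mem_of_mem_erase hs)).lt_of_ne (ne_of_mem_erase hs).symm
  refine ⟨(hQ s (mem_of_mem_erase hs)).1, hs₀s, (hQ s (mem_of_mem_erase hs)).2, ?_⟩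
  simp only [Nat.even_iff] at hm ⊢
  omega

end Constructions

theorem Yk_chain_cor_general (n k : ℕ) (hk : 2 ≤ k) (σ : ZMod n ≃ Fin n)
    (𝒜 : Finset (Finset (Fin n)))
    (hY : ¬ ContainsYk k 𝒜) (hY' : ¬ ContainsYk' k 𝒜) (i : ZMod n)
    (hcard : (𝒜 ∩ chainC n σ (i + 1)).card = k + 1)
    (B : Finset (Fin n)) (hB : IsSecondLargestCard (𝒜 ∩ chainC n σ (i + 1)) B)
    (heven : Even B.card) :
    (𝒜 ∩ chainC n σ i).card ≤ k - 1 ∧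
      ((𝒜 ∩ chainC n σ i).card = k - 1 →
        ∀ L : Finset (Fin n), IsLargestCard (𝒜 ∩ chainC n σ i) L → L.card = B.card) := by
  rw [← card_chainSizes i]
  have hbT : B.card ∈ chainSizes σ 𝒜 (i + 1) := mem_image_of_mem _ hB.1
  obtain ⟨⟨t, htT, hbt⟩, hbelow, t₀, ht₀T, ht₀b, habove⟩ :=
    exists_around_of_card_filter_lt_eq_one hk ((card_chainSizes _).trans hcard) hbT
      ((card_filter_chainSizes _ (B.card < ·)).trans hB.2)
  have hle (s) (hs : s ∈ chainSizes σ 𝒜 i) : s ≤ B.card :=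
    le_of_mem_chainSizes_of_not_containsYk hY heven hbelow htT hbt hs
  have hlt : ((chainSizes σ 𝒜 i).filter (· < B.card)).card < k - 1 :=
    card_filter_lt_lt_of_not_containsYk' hk hY' hbT heven htT hbt ht₀T ht₀b habove
  refine ⟨?_, fun hS L hL => ?_⟩
  · have hsub : chainSizes σ 𝒜 i ⊆ insert B.card ((chainSizes σ 𝒜 i).filter (· < B.card)) :=
      fun s hs => by
        rcases (hle s hs).lt_or_eq with h | rfl
        · exact mem_insert_of_mem (mem_filter.2 ⟨hs, h⟩)
        · exact mem_insert_self _ _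
    have := (card_le_card hsub).trans (card_insert_le _ _)
    omega
  · by_contra hne
    have hLb : L.card < B.card := (hle _ (mem_image_of_mem _ hL.1)).lt_of_ne hne
    have hall : (chainSizes σ 𝒜 i).filter (· < B.card) = chainSizes σ 𝒜 i :=
      filter_true_of_mem fun s hs => by
        obtain ⟨X, hX, rfl⟩ := mem_image.1 hs
        exact (hL.2 X hX).trans_lt hLb
    rw [hall] at hlt
    omega

/-- If the chain `C (i+1)` is of type `(k+1)^L` (it meets `𝒜` in `k + 1` sets, the second
largest of which has even cardinality), then `|𝒜 ∩ C i| ≤ k - 1`; moreover, in case of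
equality, the largest set of `𝒜 ∩ C i` has the same cardinality as the second largest set
of `𝒜 ∩ C (i+1)`. -/
theorem Yk_chain_cor (n k : ℕ) (hk : 2 ≤ k) (σ : ZMod n ≃ Fin n)
    (𝒜 : Finset (Finset (Fin n))) (hInt : ∀ I ∈ 𝒜, IsCycInterval n σ I)
    (hY : ¬ ContainsYk k 𝒜) (hY' : ¬ ContainsYk' k 𝒜) (i : ZMod n)
    (hcard : (𝒜 ∩ chainC n σ (i + 1)).card = k + 1)
    (B : Finset (Fin n)) (hB : IsSecondLargestCard (𝒜 ∩ chainC n σ (i + 1)) B)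
    (heven : Even B.card) :
    (𝒜 ∩ chainC n σ i).card ≤ k - 1 ∧
      ((𝒜 ∩ chainC n σ i).card = k - 1 →
        ∀ L : Finset (Fin n), IsLargestCard (𝒜 ∩ chainC n σ i) L → L.card = B.card) :=
  Yk_chain_cor_general n k hk σ 𝒜 hY hY' i hcard B hB heven
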